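/- Let (X, d) be a metric space, μ a measure on X with μ(X) < ∞, and let M, K > 0, r₁ ∈ (0,1]. Suppose w : X → ℝ is measurable with 0 ≤ w ≤ M μ-a.e. and ∫_{B_r(x)} w dμ ≥ M^{-1} exp(-2K r^{-K}) for every x ∈ X and every r ∈ (0, r₁). Let E > 0, α ∈ (0,1], and f : X → ℝ satisfy |f(x) - f(y)| ≤ E d(x,y)^α for all x, y ∈ X. If ∫_X |f| w dμ ≤ ε with 0 < ε < E, and if there exists ξ ∈ X with |f(ξ)| = sup_X |f|, then sup_X |f| ≤ M exp(2K r^{-K}) ε + E r^α for every r ∈ (0, r₁). -/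

import Mathlib

/-!
Since `|f|` attains its supremum at `ξ`, the Hölder bound gives `|f| ≥ |f ξ| - E r ^ α` on the
ball `B_r(ξ)`. Integrating this against the weight `w` over the ball bounds
`(|f ξ| - E r ^ α) ∫_{B_r(ξ)} w` by `∫ |f| w ≤ ε`, and the lower bound on `∫_{B_r(ξ)} w` turns this
into the claim.
-/

open MeasureTheory Metric

theorem holderWith_of_dist_le {X Y : Type*} [PseudoMetricSpace X] [PseudoMetricSpace Y]
    {f : X → Y} {E α : ℝ} (hE : 0 ≤ E) (hα : 0 ≤ α)
    (hf : ∀ x y, dist (f x) (f y) ≤ E * dist x y ^ α) :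
    HolderWith E.toNNReal α.toNNReal f := by
  intro x y
  rw [edist_nndist, edist_nndist, ← ENNReal.coe_rpow_of_nonneg _ (NNReal.coe_nonneg _),
    ← ENNReal.coe_mul, ENNReal.coe_le_coe, ← NNReal.coe_le_coe, NNReal.coe_mul,
    NNReal.coe_rpow, Real.coe_toNNReal E hE, Real.coe_toNNReal α hα]
  exact hf x y

theorem abs_sub_rpow_le_abs_of_mem_ball {X : Type*} [PseudoMetricSpace X] {f : X → ℝ}
    {E α r : ℝ} {ξ y : X} (hE : 0 ≤ E) (hα : 0 ≤ α)
    (hf : ∀ x y, dist (f x) (f y) ≤ E * dist x y ^ α) (hy : y ∈ ball ξ r) :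
    |f ξ| - E * r ^ α ≤ |f y| := by
  have hdist : dist ξ y ^ α ≤ r ^ α :=
    Real.rpow_le_rpow dist_nonneg (mem_ball'.mp hy).le hα
  have := (abs_sub_abs_le_abs_sub (f ξ) (f y)).trans ((Real.dist_eq _ _ ▸ hf ξ y).trans
    (mul_le_mul_of_nonneg_left hdist hE))
  linarith

theorem mul_setIntegral_le_setIntegral_mul {X : Type*} [MeasurableSpace X] {μ : Measure X}
    {s : Set X} {w g : X → ℝ} {c : ℝ} (hs : MeasurableSet s) (hw : IntegrableOn w s μ)
    (hgw : IntegrableOn (fun x => g x * w x) s μ) (hw0 : ∀ᵐ x ∂μ, 0 ≤ w x)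
    (hc : ∀ x ∈ s, c ≤ g x) :
    c * ∫ x in s, w x ∂μ ≤ ∫ x in s, g x * w x ∂μ := by
  rw [← integral_const_mul]
  refine integral_mono_ae (hw.const_mul c) hgw ?_
  filter_upwards [ae_restrict_of_ae hw0, ae_restrict_mem hs] with x hwx hx
  exact mul_le_mul_of_nonneg_right (hc x hx) hwx

theorem le_div_of_mul_le_of_le {a A B ε : ℝ} (hB : 0 < B) (hBA : B ≤ A) (hε : 0 ≤ ε)
    (h : a * A ≤ ε) : a ≤ ε / B :=
  ((le_div_iff₀ (hB.trans_le hBA)).2 h).trans (div_le_div_of_nonneg_left hε hB hBA)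

theorem stmt3_general {X : Type*} [MetricSpace X] [MeasurableSpace X] [OpensMeasurableSpace X]
    (μ : Measure X) [IsFiniteMeasure μ]
    (M K r₁ E α ε : ℝ) (hM : 0 < M)
    (hα : 0 < α ∧ α ≤ 1) (hE : 0 < E) (hε : 0 < ε ∧ ε < E)
    (w : X → ℝ) (hw : Measurable w)
    (hwb : ∀ᵐ x ∂μ, 0 ≤ w x ∧ w x ≤ M)
    (hwlow : ∀ x : X, ∀ r ∈ Set.Ioo (0 : ℝ) r₁,
      M⁻¹ * Real.exp (-2 * K * r ^ (-K)) ≤ ∫ y in Metric.ball x r, w y ∂μ)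
    (f : X → ℝ) (hf : ∀ x y : X, |f x - f y| ≤ E * dist x y ^ α)
    (hint : ∫ x, |f x| * w x ∂μ ≤ ε)
    (ξ : X) (hξ : |f ξ| = ⨆ x, |f x|) :
    ∀ r ∈ Set.Ioo (0 : ℝ) r₁,
      (⨆ x, |f x|) ≤ M * Real.exp (2 * K * r ^ (-K)) * ε + E * r ^ α := by
  intro r hr
  have hf' : ∀ x y, dist (f x) (f y) ≤ E * dist x y ^ α :=
    fun x y => (Real.dist_eq _ _).trans_le (hf x y)
  have hε0 := hε.1
  have hr0 := hr.1
  -- An unbounded `|f|` has junk supremum `0`.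
  by_cases hbdd : BddAbove (Set.range fun x => |f x|)
  swap
  · rw [Real.iSup_of_not_bddAbove hbdd]
    positivity
  rw [← hξ]
  have hw_int : Integrable w μ := Integrable.of_bound hw.aestronglyMeasurable M <| by
    filter_upwards [hwb] with x hx
    rw [Real.norm_eq_abs, abs_of_nonneg hx.1]
    exact hx.2
  have hf_cont : Continuous f :=
    (holderWith_of_dist_le hE.le hα.1.le hf').continuous (Real.toNNReal_pos.2 hα.1)
  have hfw_int : Integrable (fun x => |f x| * w x) μ :=
    hw_int.bdd_mul (c := |f ξ|) hf_cont.measurable.abs.aestronglyMeasurable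
      (ae_of_all _ fun x => by simpa [hξ] using le_ciSup hbdd x)
  have hball : (|f ξ| - E * r ^ α) * ∫ y in ball ξ r, w y ∂μ ≤ ε :=
    (mul_setIntegral_le_setIntegral_mul measurableSet_ball hw_int.integrableOn
      hfw_int.integrableOn (hwb.mono fun _ hx => hx.1)
      fun _ hy => abs_sub_rpow_le_abs_of_mem_ball hE.le hα.1.le hf' hy).trans <|
    (setIntegral_le_integral hfw_int (hwb.mono fun x hx => mul_nonneg (abs_nonneg _) hx.1)).trans
      hint
  have hexp : ε / (M⁻¹ * Real.exp (-2 * K * r ^ (-K))) = M * Real.exp (2 * K * r ^ (-K)) * ε := by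
    rw [neg_mul, neg_mul, Real.exp_neg]
    field_simp
  have hsup := le_div_of_mul_le_of_le (by positivity) (hwlow ξ r hr) hε0.le hball
  rw [hexp] at hsup
  linarith

/-- Core inequality of the weighted interpolation (Proposition 7.1). -/
theorem stmt3 {X : Type*} [MetricSpace X] [MeasurableSpace X] [OpensMeasurableSpace X]
    (μ : Measure X) [IsFiniteMeasure μ]
    (M K r₁ E α ε : ℝ) (hM : 0 < M) (hK : 0 < K) (hr₁ : 0 < r₁ ∧ r₁ ≤ 1)
    (hα : 0 < α ∧ α ≤ 1) (hE : 0 < E) (hε : 0 < ε ∧ ε < E)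
    (w : X → ℝ) (hw : Measurable w)
    (hwb : ∀ᵐ x ∂μ, 0 ≤ w x ∧ w x ≤ M)
    (hwlow : ∀ x : X, ∀ r ∈ Set.Ioo (0 : ℝ) r₁,
      M⁻¹ * Real.exp (-2 * K * r ^ (-K)) ≤ ∫ y in Metric.ball x r, w y ∂μ)
    (f : X → ℝ) (hf : ∀ x y : X, |f x - f y| ≤ E * dist x y ^ α)
    (hint : ∫ x, |f x| * w x ∂μ ≤ ε)
    (ξ : X) (hξ : |f ξ| = ⨆ x, |f x|) :
    ∀ r ∈ Set.Ioo (0 : ℝ) r₁,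
      (⨆ x, |f x|) ≤ M * Real.exp (2 * K * r ^ (-K)) * ε + E * r ^ α :=
  stmt3_general μ M K r₁ E α ε hM hα hE hε w hw hwb hwlow f hf hint ξ hξ
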